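/- arXiv:2302.11379 — 2 statements merged into one kernel-verified Lean document; each statement's English description precedes it below -/
import Mathlib

section
/- Let T : [0,∞)^V → ℝ be the last-passage time T(ω) = max over directed paths γ from the origin to (n,...,n) of Σ_{v∈γ} ω_v, and for a vertex v let k_v(ω) be the infimum of x ≥ 0 such that some maximizing path for the configuration ω with ω_v replaced by x passes through v. Then for all x ≥ 0, T^{v→x}(ω) = T^{v→k_v}(ω) + (x − k_v)₊, where T^{v→x} denotes T evaluated at ω with the weight at v replaced by x and (·)₊ is the positive part. -/
open MeasureTheory

/-- An up-right nearest-neighbour step in the lattice (modelled on `ℕ^d`). -/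
def IsStep {d : ℕ} (u v : Fin d → ℕ) : Prop :=
  ∃ i : Fin d, v = Function.update u i (u i + 1)

/-- `γ` is a directed up-right nearest-neighbour path from `(0,…,0)` to `(n,…,n)`. -/
def IsPath (d n : ℕ) (γ : List (Fin d → ℕ)) : Prop :=
  γ.Chain' IsStep ∧ γ.head? = some (fun _ => 0) ∧ γ.getLast? = some (fun _ => n)

/-- The last-passage time: the maximal weight sum over directed paths. -/
noncomputable def passageTime (d n : ℕ) (ω : (Fin d → ℕ) → ℝ) : ℝ :=
  sSup {S : ℝ | ∃ γ : List (Fin d → ℕ), IsPath d n γ ∧ S = (γ.map ω).sum}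

/-- The critical weight `k_v`: the smallest `x ≥ 0` such that `v` lies on some maximizing
path for the configuration with the weight at `v` replaced by `x`. -/
noncomputable def critical (d n : ℕ) (ω : (Fin d → ℕ) → ℝ) (v : Fin d → ℕ) : ℝ :=
  sInf {x : ℝ | 0 ≤ x ∧ ∃ γ : List (Fin d → ℕ), IsPath d n γ ∧ v ∈ γ ∧
    (γ.map (Function.update ω v x)).sum = passageTime d n (Function.update ω v x)}

/-!
Raising the weight at `v` from `0` to `y ≥ 0` adds exactly `y` to the weight of every path
through `v` and leaves every other path unchanged. Hence
`T^{v→y} = max (T^{v→0}) (B + y)`, where `B` is the largest weight of a path through `v` for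
the configuration `ω` with `ω_v = 0`. In particular `v` lies on a maximizing path of `T^{v→y}`
exactly when `y ≥ T^{v→0} - B`, so `k_v = T^{v→0} - B ≥ 0`, `T^{v→k_v} = T^{v→0}`, and the
formula follows.
-/

section Paths

variable {d n : ℕ}

lemma isStep_iff_covBy {u w : Fin d → ℕ} : IsStep u w ↔ u ⋖ w := by
  classical
  simp [IsStep, Pi.covBy_iff_exists_right_eq]

lemma IsPath.pairwise_lt {γ : List (Fin d → ℕ)} (hγ : IsPath d n γ) : γ.Pairwise (· < ·) :=
  List.isChain_iff_pairwise.mp <| hγ.1.imp fun _ _ h => (isStep_iff_covBy.mp h).lt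

lemma IsPath.nodup {γ : List (Fin d → ℕ)} (hγ : IsPath d n γ) : γ.Nodup :=
  hγ.pairwise_lt.nodup

lemma IsPath.le_of_mem {γ : List (Fin d → ℕ)} (hγ : IsPath d n γ) {u : Fin d → ℕ} (hu : u ∈ γ) :
    u ≤ fun _ => n := by
  have hle := hγ.pairwise_lt.imp le_of_lt |>.rel_getLast hu
  rwa [(List.getLast_eq_iff_getLast?_eq_some _).mpr hγ.2.2] at hle

lemma finite_setOf_isPath : {γ : List (Fin d → ℕ) | IsPath d n γ}.Finite := by
  refine Set.Finite.of_finite_image (f := List.toFinset)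
    ((Finset.Iic fun _ => n).powerset.finite_toSet.subset ?_) ?_
  · rintro _ ⟨γ, hγ, rfl⟩
    rw [Finset.mem_coe, Finset.mem_powerset]
    intro u hu
    simpa using hγ.le_of_mem (List.mem_toFinset.mp hu)
  · -- a path is strictly increasing, hence determined by its set of vertices
    intro γ hγ γ' hγ' h
    refine List.Subset.antisymm_of_pairwise hγ.pairwise_lt hγ'.pairwise_lt ?_ ?_ <;>
      intro u <;> simp [← List.mem_toFinset, h]

lemma List.exists_isChain_mem_of_reflTransGen {α : Type*} {r : α → α → Prop} {a b c : α}
    (hab : Relation.ReflTransGen r a b) (hbc : Relation.ReflTransGen r b c) :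
    ∃ l : List α, l.IsChain r ∧ l.head? = some a ∧ l.getLast? = some c ∧ b ∈ l := by
  induction hbc with
  | refl =>
    obtain ⟨l, hl, hchain, rfl, rfl⟩ := List.exists_isChain_ne_nil_of_relationReflTransGen hab
    exact ⟨l, hchain, List.head?_eq_some_head hl, List.getLast?_eq_some_getLast hl,
      List.getLast_mem hl⟩
  | @tail c d _ hcd ih =>
    obtain ⟨l, hchain, hhead, hlast, hb⟩ := ih
    refine ⟨l ++ [d], hchain.append (.singleton _) ?_, ?_, by simp, List.mem_append_left _ hb⟩
    · simpa [hlast] using hcd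
    · rwa [List.head?_append_of_ne_nil _ (List.ne_nil_of_mem hb)]

lemma exists_isPath_mem {v : Fin d → ℕ} (hv : ∀ i, v i ≤ n) :
    ∃ γ, IsPath d n γ ∧ v ∈ γ := by
  have hreach {a b : Fin d → ℕ} (hab : a ≤ b) : Relation.ReflTransGen IsStep a b :=
    Relation.ReflTransGen.mono (fun _ _ => isStep_iff_covBy.mpr) _ _
      (le_iff_reflTransGen_covBy.mp hab)
  obtain ⟨γ, hchain, hhead, hlast, hvγ⟩ :=
    List.exists_isChain_mem_of_reflTransGen (hreach fun i => (v i).zero_le) (hreach hv)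
  exact ⟨γ, ⟨hchain, hhead, hlast⟩, hvγ⟩

end Paths

section Sums

variable {α M : Type*} [DecidableEq α] [AddCommMonoid M] {l : List α} {v : α}

lemma List.Nodup.sum_map_update_of_mem (hl : l.Nodup) (hv : v ∈ l) (f : α → M) (x : M) :
    (l.map (Function.update f v x)).sum = x + (l.map (Function.update f v 0)).sum := by
  rw [← List.sum_toFinset _ hl, ← List.sum_toFinset _ hl,
    Finset.sum_update_of_mem (List.mem_toFinset.mpr hv),
    Finset.sum_update_of_mem (List.mem_toFinset.mpr hv), zero_add]

lemma List.sum_map_update_of_notMem (hv : v ∉ l) (f : α → M) (x : M) :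
    (l.map (Function.update f v x)).sum = (l.map f).sum :=
  congrArg List.sum <| List.map_congr_left fun _ hu =>
    Function.update_of_ne (ne_of_mem_of_not_mem hu hv) _ _

end Sums

noncomputable def maxPathSum (d n : ℕ) (P : List (Fin d → ℕ) → Prop) (ω : (Fin d → ℕ) → ℝ) : ℝ :=
  sSup {S : ℝ | ∃ γ, IsPath d n γ ∧ P γ ∧ S = (γ.map ω).sum}

section MaxPathSum

variable {d n : ℕ} {P : List (Fin d → ℕ) → Prop} {γ : List (Fin d → ℕ)}

lemma exists_isPath : ∃ γ, IsPath d n γ :=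
  (exists_isPath_mem (v := fun _ => 0) fun _ => Nat.zero_le n).imp fun _ => And.left

lemma finite_pathSums (P : List (Fin d → ℕ) → Prop) (ω : (Fin d → ℕ) → ℝ) :
    {S : ℝ | ∃ γ, IsPath d n γ ∧ P γ ∧ S = (γ.map ω).sum}.Finite :=
  (finite_setOf_isPath.image fun γ => (γ.map ω).sum).subset
    fun _ ⟨γ, hγ, _, hS⟩ => ⟨γ, hγ, hS.symm⟩

lemma sum_le_maxPathSum (hγ : IsPath d n γ) (hP : P γ) (ω : (Fin d → ℕ) → ℝ) :
    (γ.map ω).sum ≤ maxPathSum d n P ω :=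
  le_csSup (finite_pathSums P ω).bddAbove ⟨γ, hγ, hP, rfl⟩

lemma exists_sum_eq_maxPathSum (h : ∃ γ, IsPath d n γ ∧ P γ) (ω : (Fin d → ℕ) → ℝ) :
    ∃ γ, IsPath d n γ ∧ P γ ∧ (γ.map ω).sum = maxPathSum d n P ω := by
  obtain ⟨γ, hγ, hP⟩ := h
  obtain ⟨γ', hγ', hP', hsum⟩ := Set.Nonempty.csSup_mem
    (s := {S : ℝ | ∃ γ, IsPath d n γ ∧ P γ ∧ S = (γ.map ω).sum}) ⟨_, γ, hγ, hP, rfl⟩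
    (finite_pathSums P ω)
  exact ⟨γ', hγ', hP', hsum.symm⟩

lemma passageTime_eq_maxPathSum (ω : (Fin d → ℕ) → ℝ) :
    passageTime d n ω = maxPathSum d n (fun _ => True) ω := by
  simp [passageTime, maxPathSum]

lemma sum_le_passageTime (hγ : IsPath d n γ) (ω : (Fin d → ℕ) → ℝ) :
    (γ.map ω).sum ≤ passageTime d n ω :=
  passageTime_eq_maxPathSum ω ▸ sum_le_maxPathSum hγ trivial ω

lemma exists_sum_eq_passageTime (ω : (Fin d → ℕ) → ℝ) :
    ∃ γ, IsPath d n γ ∧ (γ.map ω).sum = passageTime d n ω := by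
  obtain ⟨γ, hγ, -, hsum⟩ :=
    exists_sum_eq_maxPathSum (exists_isPath.imp fun _ h => ⟨h, trivial⟩) ω
  exact ⟨γ, hγ, hsum.trans (passageTime_eq_maxPathSum ω).symm⟩

lemma passageTime_mono : Monotone (passageTime d n) := fun ω ω' h => by
  obtain ⟨γ, hγ, hsum⟩ := exists_sum_eq_passageTime (d := d) (n := n) ω
  exact hsum ▸ (List.sum_le_sum fun a _ => h a).trans (sum_le_passageTime hγ ω')

end MaxPathSum

section Critical

variable {d n : ℕ} {ω : (Fin d → ℕ) → ℝ} {v : Fin d → ℕ}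

lemma passageTime_update_eq_max (hv : ∀ i, v i ≤ n) {y : ℝ} (hy : 0 ≤ y) :
    passageTime d n (Function.update ω v y) = max (passageTime d n (Function.update ω v 0))
      (maxPathSum d n (v ∈ ·) (Function.update ω v 0) + y) := by
  obtain ⟨γ₀, hγ₀, hvγ₀, hsum₀⟩ := exists_sum_eq_maxPathSum (exists_isPath_mem hv)
    (Function.update ω v 0)
  obtain ⟨γ, hγ, hsum⟩ := exists_sum_eq_passageTime (d := d) (n := n) (Function.update ω v y)
  refine le_antisymm ?_ (max_le (passageTime_mono (Function.update_mono hy)) ?_)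
  · rw [← hsum]
    by_cases hvγ : v ∈ γ
    · rw [hγ.nodup.sum_map_update_of_mem hvγ, add_comm]
      exact le_max_of_le_right (add_le_add_left (sum_le_maxPathSum hγ hvγ _) y)
    · rw [List.sum_map_update_of_notMem hvγ, ← List.sum_map_update_of_notMem hvγ ω 0]
      exact le_max_of_le_left (sum_le_passageTime hγ _)
  · rw [← hsum₀, add_comm, ← hγ₀.nodup.sum_map_update_of_mem hvγ₀]
    exact sum_le_passageTime hγ₀ _

lemma exists_isPath_mem_sum_eq_passageTime_iff (hv : ∀ i, v i ≤ n) {y : ℝ} (hy : 0 ≤ y) :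
    (∃ γ, IsPath d n γ ∧ v ∈ γ ∧
        (γ.map (Function.update ω v y)).sum = passageTime d n (Function.update ω v y)) ↔
      passageTime d n (Function.update ω v 0) ≤
        maxPathSum d n (v ∈ ·) (Function.update ω v 0) + y := by
  rw [passageTime_update_eq_max hv hy]
  constructor
  · rintro ⟨γ, hγ, hvγ, hsum⟩
    rw [hγ.nodup.sum_map_update_of_mem hvγ] at hsum
    have hγB := sum_le_maxPathSum (P := (v ∈ ·)) hγ hvγ (Function.update ω v 0)
    exact (le_max_left _ _).trans (hsum.symm.trans_le (by linarith))
  · intro hle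
    obtain ⟨γ, hγ, hvγ, hsum⟩ := exists_sum_eq_maxPathSum (exists_isPath_mem hv)
      (Function.update ω v 0)
    refine ⟨γ, hγ, hvγ, ?_⟩
    rw [hγ.nodup.sum_map_update_of_mem hvγ, hsum, max_eq_right hle, add_comm]

lemma critical_nonneg : 0 ≤ critical d n ω v :=
  Real.sInf_nonneg fun _ hx => hx.1

lemma critical_eq (hv : ∀ i, v i ≤ n) :
    critical d n ω v = passageTime d n (Function.update ω v 0)
      - maxPathSum d n (v ∈ ·) (Function.update ω v 0) := by
  obtain ⟨γ, hγ, hvγ, hsum⟩ := exists_sum_eq_maxPathSum (exists_isPath_mem hv)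
    (Function.update ω v 0)
  have hle := hsum ▸ sum_le_passageTime hγ (Function.update ω v 0)
  rw [critical, ← csInf_Ici (a := passageTime d n (Function.update ω v 0)
      - maxPathSum d n (v ∈ ·) (Function.update ω v 0))]
  congr 1
  ext y
  simp only [Set.mem_ofPred_eq, Set.mem_Ici, sub_le_iff_le_add']
  constructor
  · rintro ⟨hy, h⟩
    exact (exists_isPath_mem_sum_eq_passageTime_iff hv hy).mp h
  · intro h
    have hy : 0 ≤ y := by linarith
    exact ⟨hy, (exists_isPath_mem_sum_eq_passageTime_iff hv hy).mpr h⟩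

end Critical

theorem passageTime_update_eq_general (d n : ℕ)
    (ω : (Fin d → ℕ) → ℝ)
    (v : Fin d → ℕ) (hv : ∀ i, v i ≤ n) (x : ℝ) (hx : 0 ≤ x) :
    passageTime d n (Function.update ω v x)
      = passageTime d n (Function.update ω v (critical d n ω v))
        + max (x - critical d n ω v) 0 := by
  rw [passageTime_update_eq_max hv hx, passageTime_update_eq_max hv critical_nonneg,
    critical_eq hv, add_sub_cancel, max_self, add_max, add_zero, max_comm]
  congr 1
  ring

/-- `T^{v→x}(ω) = T^{v→k_v}(ω) + (x − k_v)₊` for all `x ≥ 0`. -/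
theorem passageTime_update_eq (d n : ℕ) (hd : 1 ≤ d) (hn : 1 ≤ n)
    (ω : (Fin d → ℕ) → ℝ) (hω : ∀ u, 0 ≤ ω u)
    (v : Fin d → ℕ) (hv : ∀ i, v i ≤ n) (x : ℝ) (hx : 0 ≤ x) :
    passageTime d n (Function.update ω v x)
      = passageTime d n (Function.update ω v (critical d n ω v))
        + max (x - critical d n ω v) 0 :=
  passageTime_update_eq_general d n ω v hv x hx
end

section
/- Let ω̃ be a square-integrable random variable, and k₀, k_t real constants. Assume E[ω̃ − k_t | ω̃ ≥ k_t] ≤ E[ω̃ − k_t | ω̃ ≥ max(k₀,k_t)] and P(ω̃ ≥ k₀)P(ω̃ ≥ k_t) ≤ P(ω̃ ≥ max(k₀,k_t)). Then Cov((ω̃−k₀)₊, (ω̃−k_t)₊) ≥ Var(ω̃ | ω̃ ≥ max(k₀,k_t)) · P(ω̃ ≥ max(k₀,k_t)). -/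
/-!
Let `A = {X ≥ m}` with `m = max k₀ kₜ`, `p = P(A)` and `a = E[X | A]`. Since
`(X - k₀)₊ (X - kₜ)₊` vanishes off `A`, its expectation is
`p E[(X - k₀)(X - kₜ) | A] = p (Var(X | A) + (a - k₀)(a - kₜ))`, so it suffices to show
`E[(X - k₀)₊] E[(X - kₜ)₊] ≤ p (a - k₀)(a - kₜ)`. The first hypothesis gives
`E[(X - kₜ)₊] = P(X ≥ kₜ) E[X - kₜ | X ≥ kₜ] ≤ P(X ≥ kₜ) (a - kₜ)`, and capping `(X - k₀)₊` by
`(X - m)₊ + (m - k₀) 𝟙{X ≥ k₀}` gives `E[(X - k₀)₊] ≤ p (a - m) + (m - k₀) P(X ≥ k₀)`.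
Multiplying, `P(X ≥ kₜ) ≤ 1` and the second hypothesis `P(X ≥ k₀) P(X ≥ kₜ) ≤ p` close the
estimate.
-/

open MeasureTheory ProbabilityTheory Set

lemma max_sub_zero_mul_max_sub_zero (a b x : ℝ) :
    max (x - a) 0 * max (x - b) 0 = {y | max a b ≤ y}.indicator (fun y => (y - a) * (y - b)) x := by
  by_cases h : max a b ≤ x
  · rw [indicator_of_mem (show x ∈ {y | max a b ≤ y} from h),
      max_eq_left (sub_nonneg.2 (le_of_max_le_left h)),
      max_eq_left (sub_nonneg.2 (le_of_max_le_right h))]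
  · rw [indicator_of_notMem (show x ∉ {y | max a b ≤ y} from h)]
    rcases lt_max_iff.1 (not_le.1 h) with h' | h'
    · rw [max_eq_right (sub_nonpos.2 h'.le), zero_mul]
    · rw [max_eq_right (sub_nonpos.2 h'.le), mul_zero]

lemma max_sub_zero_le_max_sub_zero_add_indicator {a b : ℝ} (hab : a ≤ b) (x : ℝ) :
    max (x - a) 0 ≤ max (x - b) 0 + {y | a ≤ y}.indicator (fun _ => b - a) x := by
  by_cases h : a ≤ x
  · rw [indicator_of_mem (show x ∈ {y | a ≤ y} from h)]
    rcases le_total x b with hxb | hbx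
    · exact max_le (by linarith [le_max_right (x - b) 0]) (by linarith [le_max_right (x - b) 0])
    · rw [max_eq_left (by linarith : (0 : ℝ) ≤ x - b)]
      exact max_le (by linarith) (by linarith)
  · rw [indicator_of_notMem (show x ∉ {y | a ≤ y} from h), max_eq_right (by linarith)]
    positivity

section Conditioning

variable {Ω : Type*} [MeasurableSpace Ω] {μ : Measure Ω} {s : Set Ω}

lemma setIntegral_eq_measureReal_mul_integral_cond [IsFiniteMeasure μ] (s : Set Ω)
    (f : Ω → ℝ) : ∫ ω in s, f ω ∂μ = μ.real s * ∫ ω, f ω ∂μ[|s] := by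
  rcases eq_or_ne (μ s) 0 with hs | hs
  · simp [Measure.restrict_eq_zero.2 hs, measureReal_def, hs]
  · rw [ProbabilityTheory.cond, integral_smul_measure, smul_eq_mul, ← mul_assoc, measureReal_def,
      ENNReal.toReal_inv, mul_inv_cancel₀ (ENNReal.toReal_ne_zero.2 ⟨hs, measure_ne_top μ s⟩),
      one_mul]

lemma MeasureTheory.Integrable.cond {f : Ω → ℝ} (hf : Integrable f μ) (hs : μ s ≠ 0) :
    Integrable f μ[|s] :=
  hf.restrict.smul_measure (ENNReal.inv_ne_top.2 hs)

lemma MeasureTheory.MemLp.cond {p : ENNReal} {f : Ω → ℝ} (hf : MemLp f p μ) (hs : μ s ≠ 0) :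
    MemLp f p μ[|s] :=
  (hf.restrict s).smul_measure (ENNReal.inv_ne_top.2 hs)

end Conditioning

section Moments

variable {Ω : Type*} [MeasurableSpace Ω] {μ : Measure Ω} [IsProbabilityMeasure μ] {X : Ω → ℝ}

lemma integral_sub_const_eq (hX : Integrable X μ) (k : ℝ) : ∫ ω, (X ω - k) ∂μ = μ[X] - k := by
  rw [integral_sub hX (integrable_const k), integral_const, probReal_univ, one_smul]

lemma integral_sub_mul_sub_eq_variance_add (hX : MemLp X 2 μ) (a b : ℝ) :
    ∫ ω, (X ω - a) * (X ω - b) ∂μ = variance X μ + (μ[X] - a) * (μ[X] - b) := by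
  have hX1 : Integrable X μ := hX.integrable one_le_two
  have hX2 : Integrable (X ^ 2) μ := hX.integrable_sq
  have hX2' : Integrable (fun ω => (X ^ 2) ω - (a + b) * X ω) μ := hX2.sub (hX1.const_mul _)
  have hexpand : (fun ω => (X ω - a) * (X ω - b))
      = fun ω => (X ^ 2) ω - (a + b) * X ω + a * b := by
    ext ω
    simp only [Pi.pow_apply]
    ring
  rw [variance_eq_sub hX, hexpand, integral_add hX2' (integrable_const _),
    integral_sub hX2 (hX1.const_mul _), integral_const_mul, integral_const, probReal_univ,
    one_smul]
  ring

end Moments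

section CallPayoffs

variable {Ω : Type*} [MeasurableSpace Ω] {μ : Measure Ω} [IsFiniteMeasure μ] {X : Ω → ℝ}

lemma integral_max_sub_zero_eq_mul_integral_cond (hX : Measurable X) (k : ℝ) :
    ∫ ω, max (X ω - k) 0 ∂μ
      = μ.real {ω | k ≤ X ω} * ∫ ω, (X ω - k) ∂μ[|{ω | k ≤ X ω}] := by
  rw [← setIntegral_eq_measureReal_mul_integral_cond,
    ← integral_indicator (measurableSet_le measurable_const hX)]
  congr 1 with ω
  by_cases h : k ≤ X ω
  · simp [h]
  · simp [h, le_of_not_ge h]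

lemma integral_max_sub_zero_mul_max_sub_zero (hX : Measurable X) (a b : ℝ) :
    ∫ ω, max (X ω - a) 0 * max (X ω - b) 0 ∂μ
      = μ.real {ω | max a b ≤ X ω}
        * ∫ ω, (X ω - a) * (X ω - b) ∂μ[|{ω | max a b ≤ X ω}] := by
  rw [← setIntegral_eq_measureReal_mul_integral_cond,
    ← integral_indicator (measurableSet_le measurable_const hX)]
  congr 1 with ω
  exact max_sub_zero_mul_max_sub_zero a b (X ω)

lemma integral_max_sub_zero_le (hX : Measurable X) (hXi : Integrable X μ) {a b : ℝ}
    (hab : a ≤ b) :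
    ∫ ω, max (X ω - a) 0 ∂μ ≤ ∫ ω, max (X ω - b) 0 ∂μ + (b - a) * μ.real {ω | a ≤ X ω} := by
  have hb : Integrable (fun ω => max (X ω - b) 0) μ := (hXi.sub (integrable_const b)).pos_part
  have hind : Integrable ({ω | a ≤ X ω}.indicator fun _ => b - a) μ :=
    (integrable_const _).indicator (measurableSet_le measurable_const hX)
  calc ∫ ω, max (X ω - a) 0 ∂μ
      ≤ ∫ ω, (max (X ω - b) 0 + {ω | a ≤ X ω}.indicator (fun _ => b - a) ω) ∂μ :=
        integral_mono (hXi.sub (integrable_const a)).pos_part (hb.add hind)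
          fun ω => max_sub_zero_le_max_sub_zero_add_indicator hab (X ω)
    _ = _ := by
        rw [integral_add hb hind,
          integral_indicator_const _ (measurableSet_le measurable_const hX), smul_eq_mul, mul_comm]

lemma le_integral_cond_setOf_le (hX : Measurable X) (hXi : Integrable X μ) {k : ℝ}
    (hk : μ {ω | k ≤ X ω} ≠ 0) : k ≤ ∫ ω, X ω ∂μ[|{ω | k ≤ X ω}] := by
  have : IsProbabilityMeasure μ[|{ω | k ≤ X ω}] := cond_isProbabilityMeasure hk
  simpa using integral_mono_ae (integrable_const k) (hXi.cond hk)
    (ae_cond_mem (measurableSet_le measurable_const hX))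

end CallPayoffs

theorem integral_max_sub_zero_mul_integral_max_sub_zero_le {Ω : Type*} [MeasurableSpace Ω]
    {μ : Measure Ω} [IsProbabilityMeasure μ] {X : Ω → ℝ} (hX : Measurable X)
    (hXi : Integrable X μ) {k₀ kt : ℝ} (hA : μ {ω | max k₀ kt ≤ X ω} ≠ 0)
    (hexp : ∫ ω, (X ω - kt) ∂μ[|{ω | kt ≤ X ω}] ≤ ∫ ω, (X ω - kt) ∂μ[|{ω | max k₀ kt ≤ X ω}])
    (hprob : μ.real {ω | k₀ ≤ X ω} * μ.real {ω | kt ≤ X ω} ≤ μ.real {ω | max k₀ kt ≤ X ω}) :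
    (∫ ω, max (X ω - k₀) 0 ∂μ) * (∫ ω, max (X ω - kt) 0 ∂μ)
      ≤ μ.real {ω | max k₀ kt ≤ X ω} * ((μ[|{ω | max k₀ kt ≤ X ω}][X] - k₀)
        * (μ[|{ω | max k₀ kt ≤ X ω}][X] - kt)) := by
  have : IsProbabilityMeasure μ[|{ω | max k₀ kt ≤ X ω}] := cond_isProbabilityMeasure hA
  set m := max k₀ kt
  set p := μ.real {ω | m ≤ X ω}
  set a := μ[|{ω | m ≤ X ω}][X]
  have hm_le : m ≤ a := le_integral_cond_setOf_le hX hXi hA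
  have hkt_le : kt ≤ a := (le_max_right k₀ kt).trans hm_le
  have hk₀_le : k₀ ≤ m := le_max_left k₀ kt
  have hIt : ∫ ω, max (X ω - kt) 0 ∂μ ≤ μ.real {ω | kt ≤ X ω} * (a - kt) := by
    rw [integral_max_sub_zero_eq_mul_integral_cond hX, ← integral_sub_const_eq (hXi.cond hA)]
    exact mul_le_mul_of_nonneg_left hexp measureReal_nonneg
  have hI₀ : ∫ ω, max (X ω - k₀) 0 ∂μ ≤ p * (a - m) + (m - k₀) * μ.real {ω | k₀ ≤ X ω} := by
    rw [← integral_sub_const_eq (hXi.cond hA), ← integral_max_sub_zero_eq_mul_integral_cond hX]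
    exact integral_max_sub_zero_le hX hXi hk₀_le
  calc _ ≤ (p * (a - m) + (m - k₀) * μ.real {ω | k₀ ≤ X ω}) * (μ.real {ω | kt ≤ X ω} * (a - kt)) :=
        mul_le_mul_of_nonneg hI₀ hIt (integral_nonneg fun _ => le_max_right _ _)
          (mul_nonneg measureReal_nonneg (sub_nonneg.2 hkt_le))
    _ = (p * (a - m) * μ.real {ω | kt ≤ X ω}
          + (m - k₀) * (μ.real {ω | k₀ ≤ X ω} * μ.real {ω | kt ≤ X ω})) * (a - kt) := by ring
    _ ≤ (p * (a - m) + (m - k₀) * p) * (a - kt) := by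
        refine mul_le_mul_of_nonneg_right (add_le_add ?_ ?_) (sub_nonneg.2 hkt_le)
        · exact mul_le_of_le_one_right (mul_nonneg measureReal_nonneg (sub_nonneg.2 hm_le))
            measureReal_le_one
        · exact mul_le_mul_of_nonneg_left hprob (sub_nonneg.2 hk₀_le)
    _ = p * ((a - k₀) * (a - kt)) := by ring

/-- Given the conditional expectation inequality and the probability inequality for
`A = {ω̃ ≥ max(k₀,k_t)}`, one has
`Cov((ω̃−k₀)₊, (ω̃−k_t)₊) ≥ Var(ω̃ | A) ⬝ P(A)`. -/
theorem cov_pos_parts_ge {Ω : Type*} [MeasurableSpace Ω] (μ : Measure Ω)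
    [IsProbabilityMeasure μ] (X : Ω → ℝ) (hX : Measurable X) (k₀ kt : ℝ)
    (hA : 0 < μ {ω | max k₀ kt ≤ X ω}) (h2 : MemLp X 2 μ)
    (hexp : (∫ ω, (X ω - kt) ∂(ProbabilityTheory.cond μ {ω | kt ≤ X ω}))
        ≤ ∫ ω, (X ω - kt) ∂(ProbabilityTheory.cond μ {ω | max k₀ kt ≤ X ω}))
    (hprob : (μ {ω | k₀ ≤ X ω}).toReal * (μ {ω | kt ≤ X ω}).toReal
        ≤ (μ {ω | max k₀ kt ≤ X ω}).toReal) :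
    variance X (ProbabilityTheory.cond μ {ω | max k₀ kt ≤ X ω})
        * (μ {ω | max k₀ kt ≤ X ω}).toReal
      ≤ (∫ ω, max (X ω - k₀) 0 * max (X ω - kt) 0 ∂μ)
        - (∫ ω, max (X ω - k₀) 0 ∂μ) * (∫ ω, max (X ω - kt) 0 ∂μ) := by
  have : IsProbabilityMeasure μ[|{ω | max k₀ kt ≤ X ω}] := cond_isProbabilityMeasure hA.ne'
  have hcalls := integral_max_sub_zero_mul_integral_max_sub_zero_le hX
    (h2.integrable one_le_two) hA.ne' hexp hprob
  rw [integral_max_sub_zero_mul_max_sub_zero hX,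
    integral_sub_mul_sub_eq_variance_add (h2.cond hA.ne')]
  simp only [measureReal_def] at hcalls ⊢
  linarith
end
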